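/- arXiv:cs/0208033 — 6 statements merged into one kernel-verified Lean document; each statement's English description precedes it below -/
import Mathlib

section
/- For any system R for m agents and any agent i, the following are equivalent: (a) agent i has perfect recall in R; (b) for all points (r,n) ∼_i (r',n') in R, the finite sequence of points ((r,0),...,(r,n)) is ∼_i-concordant with ((r',0),...,(r',n')); (c) for all points (r,n) ∼_i (r',n') in R, if n > 0, then either (r,n-1) ∼_i (r',n') or there exists l < n' such that (r,n-1) ∼_i (r',l) and (r,n) ∼_i (r',k) for all k with l < k ≤ n'; (d) for all points (r,n) ∼_i (r',n') in R and all k ≤ n, there exists k' ≤ n' such that (r,k) ∼_i (r',k'). -/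
namespace HalpernVardiMeyden

open scoped Classical

/-- A global state for `m` agents: an environment state together with a
local state for each agent. -/
abbrev GRun (L : Type) (m : ℕ) : Type := ℕ → L × (Fin m → L)

/-- The points `(r,n)` and `(r',n')` are indistinguishable to agent `i`. -/
def locEq {L : Type} {m : ℕ} (i : Fin m) (r : GRun L m) (n : ℕ)
    (r' : GRun L m) (n' : ℕ) : Prop :=
  (r n).2 i = (r' n').2 i

/-- The system `R` is synchronous. -/
def SyncSys {L : Type} {m : ℕ} (R : Set (GRun L m)) : Prop :=
  ∀ i : Fin m, ∀ r ∈ R, ∀ r' ∈ R, ∀ n n' : ℕ, locEq i r n r' n' → n = n'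

/-- The system `R` has a unique initial state. -/
def UISSys {L : Type} {m : ℕ} (R : Set (GRun L m)) : Prop :=
  ∀ r ∈ R, ∀ r' ∈ R, r 0 = r' 0

/-- Omit consecutive repetitions from a list. -/
noncomputable def dedup {L : Type} : List L → List L
  | [] => []
  | [a] => [a]
  | a :: b :: l => if a = b then dedup (b :: l) else a :: dedup (b :: l)

/-- Agent `i`'s local-state sequence at the point `(r,n)`: the sequence of local states
of agent `i` in `r 0, …, r n`, with consecutive repetitions omitted. -/
noncomputable def lsSeq {L : Type} {m : ℕ} (i : Fin m) (r : GRun L m) (n : ℕ) : List L :=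
  dedup ((List.range (n + 1)).map fun k => (r k).2 i)

/-- Agent `i` has perfect recall in the system `R`. -/
def PerfectRecallSys {L : Type} {m : ℕ} (R : Set (GRun L m)) (i : Fin m) : Prop :=
  ∀ r ∈ R, ∀ r' ∈ R, ∀ n n' : ℕ, locEq i r n r' n' → lsSeq i r n = lsSeq i r' n'

/-- `futureIdx i r n j` is the index (time) of the `j`-th entry of agent `i`'s
future local-state sequence at `(r,n)` (where consecutive repetitions are omitted),
if this sequence has a `j`-th entry. -/
noncomputable def futureIdx {L : Type} {m : ℕ} (i : Fin m) (r : GRun L m) (n : ℕ) :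
    ℕ → Option ℕ
  | 0 => some n
  | j + 1 => (futureIdx i r n j).bind fun t =>
      if h : ∃ k, t < k ∧ (r k).2 i ≠ (r t).2 i then some (Nat.find h) else none

/-- Agent `i`'s future local-state sequence at `(r,n)`: the (possibly finite) sequence of
local states of agent `i` in `r n, r (n+1), …`, with consecutive repetitions omitted,
represented as a function `ℕ → Option L`. -/
noncomputable def futureSeq {L : Type} {m : ℕ} (i : Fin m) (r : GRun L m) (n : ℕ)
    (j : ℕ) : Option L :=
  (futureIdx i r n j).map fun t => (r t).2 i

/-- Agent `i` does not learn in the system `R`. -/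
def NoLearningSys {L : Type} {m : ℕ} (R : Set (GRun L m)) (i : Fin m) : Prop :=
  ∀ r ∈ R, ∀ r' ∈ R, ∀ n n' : ℕ, locEq i r n r' n' →
    ∀ j : ℕ, futureSeq i r n j = futureSeq i r' n' j


/-- Two finite sequences, indexed by `0,…,N` and `0,…,N'`, are `Rel`-concordant:
there are nonempty consecutive intervals `S_1,…,S_k` of the first and `T_1,…,T_k` of the
second such that every element of `S_j` is `Rel`-related to every element of `T_j`.
The functions `f` and `g` assign to each index its block number. -/
def FinConcordant (Rel : ℕ → ℕ → Prop) (N N' : ℕ) : Prop :=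
  ∃ f g : ℕ → ℕ,
    f 0 = 0 ∧ g 0 = 0 ∧
    (∀ a : ℕ, a < N → f a ≤ f (a + 1) ∧ f (a + 1) ≤ f a + 1) ∧
    (∀ b : ℕ, b < N' → g b ≤ g (b + 1) ∧ g (b + 1) ≤ g b + 1) ∧
    f N = g N' ∧
    (∀ a ≤ N, ∀ b ≤ N', f a = g b → Rel a b)

section Aux

variable {L : Type} {m : ℕ}

lemma dedup_concat : ∀ (l : List L) (z x : L),
    dedup (l ++ [z, x]) = if x = z then dedup (l ++ [z]) else dedup (l ++ [z]) ++ [x] := by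
  intro l
  induction l with
  | nil =>
      intro z x
      by_cases h : x = z
      · subst h; simp [dedup]
      · have h' : ¬ z = x := fun hz => h hz.symm
        simp [dedup, h, h']
  | cons a l ih =>
      intro z x
      cases l with
      | nil =>
          by_cases h2 : x = z
          · subst h2
            by_cases h1 : a = x <;> simp [dedup, h1]
          · have h3 : ¬ z = x := fun hz => h2 hz.symm
            by_cases h1 : a = z <;> simp [dedup, h1, h2, h3]
      | cons b l' =>
          have hih := ih z x
          simp only [List.cons_append] at hih ⊢
          by_cases hx : x = z
          · subst hx
            rw [if_pos rfl] at hih ⊢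
            by_cases h : a = b <;> simp [dedup, h, hih]
          · rw [if_neg hx] at hih ⊢
            by_cases h : a = b <;> simp [dedup, h, hih, hx]

/-- The block number of index `n` in the sequence `s`. -/
noncomputable def blk (s : ℕ → L) : ℕ → ℕ
  | 0 => 0
  | n + 1 => blk s n + if s (n + 1) = s n then 0 else 1

lemma lsSeq_zero (i : Fin m) (r : GRun L m) : lsSeq i r 0 = [(r 0).2 i] := by
  simp [lsSeq, List.range_succ, dedup]

lemma map_range_succ (s : ℕ → L) (n : ℕ) :
    (List.range (n + 1)).map s = (List.range n).map s ++ [s n] := by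
  simp [List.range_succ]

lemma lsSeq_succ (i : Fin m) (r : GRun L m) (n : ℕ) :
    lsSeq i r (n + 1) = if (r (n + 1)).2 i = (r n).2 i then lsSeq i r n
      else lsSeq i r n ++ [(r (n + 1)).2 i] := by
  have h1 : (List.range (n + 2)).map (fun k => (r k).2 i)
      = (List.range n).map (fun k => (r k).2 i) ++ [(r n).2 i, (r (n + 1)).2 i] := by
    rw [map_range_succ, map_range_succ]; simp
  unfold lsSeq
  rw [h1, dedup_concat, ← map_range_succ]

lemma lsSeq_length (i : Fin m) (r : GRun L m) (n : ℕ) :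
    (lsSeq i r n).length = blk (fun k => (r k).2 i) n + 1 := by
  induction n with
  | zero => simp [lsSeq_zero, blk]
  | succ n ih =>
      rw [lsSeq_succ]
      by_cases h : (r (n + 1)).2 i = (r n).2 i <;> simp [blk, h, ih]

lemma blk_le_succ (s : ℕ → L) (n : ℕ) : blk s n ≤ blk s (n + 1) := by
  show blk s n ≤ blk s n + _
  exact Nat.le_add_right _ _

lemma blk_succ_le (s : ℕ → L) (n : ℕ) : blk s (n + 1) ≤ blk s n + 1 := by
  show blk s n + _ ≤ blk s n + 1
  split <;> omega

lemma blk_mono (s : ℕ → L) {a b : ℕ} (h : a ≤ b) : blk s a ≤ blk s b := by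
  induction b with
  | zero => obtain rfl : a = 0 := Nat.le_zero.mp h; exact le_rfl
  | succ b ih =>
      rcases Nat.eq_or_lt_of_le h with rfl | h'
      · exact le_rfl
      · exact (ih (Nat.lt_succ_iff.mp h')).trans (blk_le_succ s b)

lemma lsSeq_prefix (i : Fin m) (r : GRun L m) {a n : ℕ} (h : a ≤ n) :
    lsSeq i r a <+: lsSeq i r n := by
  induction n with
  | zero => obtain rfl : a = 0 := Nat.le_zero.mp h; exact List.prefix_refl _
  | succ n ih =>
      rcases Nat.eq_or_lt_of_le h with rfl | h'
      · exact List.prefix_refl _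
      · have hp := ih (Nat.lt_succ_iff.mp h')
        rw [lsSeq_succ]
        split
        · exact hp
        · exact hp.trans (List.prefix_append _ _)

lemma lsSeq_getElem? (i : Fin m) (r : GRun L m) (n : ℕ) :
    ∀ a ≤ n, (lsSeq i r n)[blk (fun k => (r k).2 i) a]? = some ((r a).2 i) := by
  induction n with
  | zero =>
      intro a ha
      obtain rfl : a = 0 := Nat.le_zero.mp ha
      simp [lsSeq_zero, blk]
  | succ n ih =>
      intro a ha
      rcases Nat.eq_or_lt_of_le ha with rfl | h'
      · rw [lsSeq_succ]
        by_cases hc2 : (r (n + 1)).2 i = (r n).2 i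
        · rw [if_pos hc2]
          have hb : blk (fun k => (r k).2 i) (n + 1) = blk (fun k => (r k).2 i) n := by
            simp [blk, hc2]
          rw [hb, ih n le_rfl, hc2]
        · rw [if_neg hc2]
          have hb : blk (fun k => (r k).2 i) (n + 1) = (lsSeq i r n).length := by
            simp [blk, hc2, lsSeq_length]
          rw [hb]
          simp
      · have ha' : a ≤ n := Nat.lt_succ_iff.mp h'
        rw [lsSeq_succ]
        split
        · exact ih a ha'
        · have hlt : blk (fun k => (r k).2 i) a < (lsSeq i r n).length := by
            rw [lsSeq_length]
            exact Nat.lt_succ_of_le (blk_mono _ ha')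
          rw [List.getElem?_append, if_pos hlt]
          exact ih a ha'

lemma lsSeq_const (i : Fin m) (r : GRun L m) (n : ℕ) (c : L)
    (h : ∀ k ≤ n, (r k).2 i = c) : lsSeq i r n = [c] := by
  induction n with
  | zero => rw [lsSeq_zero, h 0 le_rfl]
  | succ n ih =>
      have hc : (r (n + 1)).2 i = (r n).2 i := by
        rw [h (n + 1) le_rfl, h n (by omega)]
      rw [lsSeq_succ, if_pos hc]
      exact ih fun k hk => h k (by omega)

lemma mono_of_step {f : ℕ → ℕ} {N : ℕ} (hstep : ∀ a < N, f a ≤ f (a + 1))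
    {a b : ℕ} (hab : a ≤ b) (hbN : b ≤ N) : f a ≤ f b := by
  induction b with
  | zero => obtain rfl : a = 0 := Nat.le_zero.mp hab; exact le_rfl
  | succ b ih =>
      rcases Nat.eq_or_lt_of_le hab with rfl | h'
      · exact le_rfl
      · exact (ih (Nat.lt_succ_iff.mp h') (by omega)).trans (hstep b (by omega))

lemma ivt_step : ∀ (N : ℕ) (g : ℕ → ℕ) (v : ℕ), (∀ b < N, g (b + 1) ≤ g b + 1) →
    g 0 ≤ v → v ≤ g N → ∃ b ≤ N, g b = v := by
  intro N
  induction N with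
  | zero => intro g v _ h0 hN; exact ⟨0, le_rfl, le_antisymm h0 hN⟩
  | succ N ih =>
      intro g v hstep h0 hN
      by_cases h : v ≤ g N
      · obtain ⟨b, hb, hgb⟩ := ih g v (fun b hb => hstep b (by omega)) h0 h
        exact ⟨b, by omega, hgb⟩
      · have h1 := hstep N (by omega)
        exact ⟨N + 1, le_rfl, by omega⟩

end Aux

/-- **Lemma 2.2.** Equivalent characterizations of perfect recall. -/
theorem perfectRecall_tfae {L : Type} {m : ℕ} (R : Set (GRun L m)) (i : Fin m) :
    List.TFAE
      [PerfectRecallSys R i,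
       ∀ r ∈ R, ∀ r' ∈ R, ∀ n n' : ℕ, locEq i r n r' n' →
         FinConcordant (fun a b => locEq i r a r' b) n n',
       ∀ r ∈ R, ∀ r' ∈ R, ∀ n n' : ℕ, locEq i r n r' n' → 0 < n →
         (locEq i r (n - 1) r' n' ∨
           ∃ l < n', locEq i r (n - 1) r' l ∧
             ∀ k : ℕ, l < k → k ≤ n' → locEq i r n r' k),
       ∀ r ∈ R, ∀ r' ∈ R, ∀ n n' : ℕ, locEq i r n r' n' →
         ∀ k ≤ n, ∃ k' ≤ n', locEq i r k r' k'] := by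
  tfae_have 1 → 2 := by
    intro h1 r hr r' hr' n n' hEq
    have hls : lsSeq i r n = lsSeq i r' n' := h1 r hr r' hr' n n' hEq
    refine ⟨blk (fun k => (r k).2 i), blk (fun k => (r' k).2 i), rfl, rfl,
      fun a _ => ⟨blk_le_succ _ a, blk_succ_le _ a⟩,
      fun b _ => ⟨blk_le_succ _ b, blk_succ_le _ b⟩, ?_, ?_⟩
    · have h1l := lsSeq_length i r n
      have h2l := lsSeq_length i r' n'
      rw [hls] at h1l
      omega
    · intro a haN b hbN hab
      have e1 := lsSeq_getElem? i r n a haN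
      have e2 := lsSeq_getElem? i r' n' b hbN
      rw [hls, hab, e2] at e1
      exact (Option.some.inj e1).symm
  tfae_have 2 → 3 := by
    intro h2 r hr r' hr' n n' hEq hn
    obtain ⟨f, g, hf0, hg0, hfs, hgs, hfg, hrel⟩ := h2 r hr r' hr' n n' hEq
    obtain ⟨nm, rfl⟩ : ∃ nm, n = nm + 1 := ⟨n - 1, (Nat.succ_pred_eq_of_pos hn).symm⟩
    simp only [Nat.add_sub_cancel]
    have hstepf := hfs nm (Nat.lt_succ_self nm)
    by_cases hcase : f (nm + 1) = f nm
    · left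
      exact hrel nm (by omega) n' le_rfl (hcase.symm.trans hfg)
    · right
      have hfn1 : f (nm + 1) = f nm + 1 := by omega
      have hmono_g : ∀ a b, a ≤ b → b ≤ n' → g a ≤ g b :=
        fun a b hab hbN => mono_of_step (fun x hx => (hgs x hx).1) hab hbN
      obtain ⟨b, hb, hgb⟩ := ivt_step n' g (f nm) (fun x hx => (hgs x hx).2)
        (by omega) (by omega)
      have hl : g (Nat.findGreatest (fun b => g b = f nm) n') = f nm :=
        Nat.findGreatest_spec (P := fun b => g b = f nm) hb hgb
      set l := Nat.findGreatest (fun b => g b = f nm) n' with hldef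
      have hln' : l ≤ n' := Nat.findGreatest_le n'
      have hlne : l ≠ n' := by
        intro h
        rw [h] at hl
        omega
      refine ⟨l, lt_of_le_of_ne hln' hlne, hrel nm (by omega) l hln' hl.symm, ?_⟩
      intro k hk hk'
      have h1 : g l ≤ g k := hmono_g l k (le_of_lt hk) hk'
      have h2' : g k ≤ g n' := hmono_g k n' hk' le_rfl
      have h3 : g k ≠ f nm :=
        Nat.findGreatest_is_greatest (P := fun b => g b = f nm) hk hk'
      exact hrel (nm + 1) le_rfl k hk' (by omega)
  tfae_have 3 → 4 := by
    intro h3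
    have key : ∀ n, ∀ r ∈ R, ∀ r' ∈ R, ∀ n', locEq i r n r' n' →
        ∀ k ≤ n, ∃ k' ≤ n', locEq i r k r' k' := by
      intro n
      induction n with
      | zero =>
          intro r hr r' hr' n' hEq k hk
          obtain rfl : k = 0 := Nat.le_zero.mp hk
          exact ⟨n', le_rfl, hEq⟩
      | succ n ih =>
          intro r hr r' hr' n' hEq k hk
          rcases Nat.eq_or_lt_of_le hk with rfl | hk'
          · exact ⟨n', le_rfl, hEq⟩
          · have hk2 : k ≤ n := Nat.lt_succ_iff.mp hk'
            rcases h3 r hr r' hr' (n + 1) n' hEq (Nat.succ_pos n) with h | ⟨l, hl, hEq', _⟩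
            · simp only [Nat.add_sub_cancel] at h
              exact ih r hr r' hr' n' h k hk2
            · simp only [Nat.add_sub_cancel] at hEq'
              obtain ⟨k', hk'', hE⟩ := ih r hr r' hr' l hEq' k hk2
              exact ⟨k', by omega, hE⟩
    exact fun r hr r' hr' n n' hEq => key n r hr r' hr' n' hEq
  tfae_have 4 → 1 := by
    intro h4
    have main : ∀ N n n' (r : GRun L m), r ∈ R → ∀ (r' : GRun L m), r' ∈ R →
        n + n' ≤ N → locEq i r n r' n' → lsSeq i r n = lsSeq i r' n' := by
      intro N
      induction N with
      | zero =>
          intro n n' r hr r' hr' hsum hEq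
          have hn : n = 0 := by omega
          have hn' : n' = 0 := by omega
          subst hn; subst hn'
          rw [lsSeq_zero, lsSeq_zero]
          exact congrArg (fun c => [c]) hEq
      | succ N ih =>
          intro n n' r hr r' hr' hsum hEq
          cases n with
          | zero =>
              have hall : ∀ k ≤ n', (r' k).2 i = (r 0).2 i := by
                intro k hk
                obtain ⟨k', hk', hE⟩ := h4 r' hr' r hr n' 0 hEq.symm k hk
                obtain rfl : k' = 0 := Nat.le_zero.mp hk'
                exact hE
              rw [lsSeq_zero, lsSeq_const i r' n' ((r 0).2 i) hall]
          | succ n =>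
              cases n' with
              | zero =>
                  have hall : ∀ k ≤ n + 1, (r k).2 i = (r' 0).2 i := by
                    intro k hk
                    obtain ⟨k', hk', hE⟩ := h4 r hr r' hr' (n + 1) 0 hEq k hk
                    obtain rfl : k' = 0 := Nat.le_zero.mp hk'
                    exact hE
                  rw [lsSeq_zero, lsSeq_const i r (n + 1) ((r' 0).2 i) hall]
              | succ n' =>
                  by_cases hc1 : (r (n + 1)).2 i = (r n).2 i
                  · rw [lsSeq_succ i r n, if_pos hc1]
                    exact ih n (n' + 1) r hr r' hr' (by omega) (hc1.symm.trans hEq)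
                  · by_cases hc2 : (r' (n' + 1)).2 i = (r' n').2 i
                    · rw [lsSeq_succ i r' n', if_pos hc2]
                      exact ih (n + 1) n' r hr r' hr' (by omega) (hEq.trans hc2)
                    · obtain ⟨k', hk', hE1⟩ :=
                        h4 r hr r' hr' (n + 1) (n' + 1) hEq n (by omega)
                      have hE1' : (r n).2 i = (r' k').2 i := hE1
                      have hk'le : k' ≤ n' := by
                        have : k' ≠ n' + 1 := by
                          intro h
                          subst h
                          exact hc1 (hEq.trans hE1'.symm)
                        omega
                      obtain ⟨j, hj, hE2⟩ :=
                        h4 r' hr' r hr (n' + 1) (n + 1) hEq.symm n' (by omega)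
                      have hE2' : (r' n').2 i = (r j).2 i := hE2
                      have hjle : j ≤ n := by
                        have : j ≠ n + 1 := by
                          intro h
                          subst h
                          exact hc2 (hEq.symm.trans hE2'.symm)
                        omega
                      have e1 : lsSeq i r n = lsSeq i r' k' :=
                        ih n k' r hr r' hr' (by omega) hE1
                      have e2 : lsSeq i r' n' = lsSeq i r j :=
                        ih n' j r' hr' r hr (by omega) hE2
                      have p1 : lsSeq i r' k' <+: lsSeq i r' n' := lsSeq_prefix i r' hk'le
                      have p2 : lsSeq i r j <+: lsSeq i r n := lsSeq_prefix i r hjle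
                      rw [← e1] at p1
                      rw [← e2] at p2
                      have hmn : lsSeq i r n = lsSeq i r' n' :=
                        p1.eq_of_length (le_antisymm p1.length_le p2.length_le)
                      rw [lsSeq_succ i r n, if_neg hc1, lsSeq_succ i r' n', if_neg hc2,
                        hmn, show (r (n + 1)).2 i = (r' (n' + 1)).2 i from hEq]
    exact fun r hr r' hr' n n' hEq => main (n + n') n n' r hr r' hr' le_rfl hEq
  tfae_finish

end HalpernVardiMeyden
end

section
/- For any system R for m agents and any agent i, the following are equivalent: (a) agent i does not learn in R; (b) for all points (r,n) ∼_i (r',n') in R, the infinite sequence of points ((r,n),(r,n+1),...) is ∼_i-concordant with ((r',n'),(r',n'+1),...); (c) for all points (r,n) ∼_i (r',n') in R, either (r,n+1) ∼_i (r',n') or there exists l > n' such that (r,n+1) ∼_i (r',l) and (r,n) ∼_i (r',k) for all k with n' ≤ k < l. -/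
namespace HalpernVardiMeyden

open scoped Classical

/-- Two infinite sequences (indexed by `ℕ`) are `Rel`-concordant: there are nonempty
consecutive intervals `S_1,…,S_k` (with `k` possibly infinite) of the first and
`T_1,…,T_k` of the second, jointly exhausting both sequences, such that every element of
`S_j` is `Rel`-related to every element of `T_j`.  The functions `f` and `g` assign to
each index its block number. -/
def InfConcordant (Rel : ℕ → ℕ → Prop) : Prop :=
  ∃ f g : ℕ → ℕ,
    f 0 = 0 ∧ g 0 = 0 ∧
    (∀ a : ℕ, f a ≤ f (a + 1) ∧ f (a + 1) ≤ f a + 1) ∧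
    (∀ b : ℕ, g b ≤ g (b + 1) ∧ g (b + 1) ≤ g b + 1) ∧
    (∀ j : ℕ, (∃ a, f a = j) ↔ (∃ b, g b = j)) ∧
    (∀ a b : ℕ, f a = g b → Rel a b)

section Aux

variable {L : Type} {m : ℕ}

lemma futureIdx_zero (i : Fin m) (r : GRun L m) (n : ℕ) : futureIdx i r n 0 = some n := rfl

lemma futureIdx_succ_eq (i : Fin m) (r : GRun L m) (n j : ℕ) :
    futureIdx i r n (j + 1) = (futureIdx i r n j).bind fun t =>
      if h : ∃ k, t < k ∧ (r k).2 i ≠ (r t).2 i then some (Nat.find h) else none := rfl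

lemma futureIdx_none_succ (i : Fin m) (r : GRun L m) (n j : ℕ)
    (h : futureIdx i r n j = none) : futureIdx i r n (j + 1) = none := by
  rw [futureIdx_succ_eq, h]; rfl

lemma futureIdx_one_none (i : Fin m) (r : GRun L m) (n : ℕ)
    (h : futureIdx i r n 1 = none) : ∀ j, futureIdx i r n (j + 1) = none := by
  intro j
  induction j with
  | zero => exact h
  | succ j ih => exact futureIdx_none_succ i r n (j + 1) ih

lemma futureIdx_shift (i : Fin m) (r : GRun L m) (n t : ℕ)
    (h : futureIdx i r n 1 = some t) : ∀ j, futureIdx i r n (j + 1) = futureIdx i r t j := by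
  intro j
  induction j with
  | zero => exact h
  | succ j ih => rw [futureIdx_succ_eq, ih, ← futureIdx_succ_eq]

lemma futureIdx_ge (i : Fin m) (r : GRun L m) (n : ℕ) :
    ∀ j t, futureIdx i r n j = some t → n ≤ t := by
  intro j
  induction j with
  | zero =>
    intro t h
    rw [futureIdx_zero] at h
    exact le_of_eq (Option.some.inj h)
  | succ j ih =>
    intro t h
    rw [futureIdx_succ_eq] at h
    cases hft : futureIdx i r n j with
    | none => rw [hft] at h; simp at h
    | some u =>
      rw [hft] at h
      rw [Option.bind_some] at h
      split at h
      · next hex =>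
        have := Nat.find_spec hex
        have hnu := ih u hft
        have := Option.some.inj h
        omega
      · simp at h

/-- The counting function: `cnt i r n a` is the number of changes of agent `i`'s local
state in `r` within the interval `(n, n+a]`. -/
noncomputable def cnt (i : Fin m) (r : GRun L m) (n : ℕ) : ℕ → ℕ
  | 0 => 0
  | a + 1 => cnt i r n a + (if (r (n + a + 1)).2 i = (r (n + a)).2 i then 0 else 1)

lemma cnt_zero (i : Fin m) (r : GRun L m) (n : ℕ) : cnt i r n 0 = 0 := rfl

lemma cnt_succ (i : Fin m) (r : GRun L m) (n a : ℕ) :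
    cnt i r n (a + 1) = cnt i r n a + (if (r (n + a + 1)).2 i = (r (n + a)).2 i then 0 else 1) :=
  rfl

lemma cnt_climb (i : Fin m) (r : GRun L m) (n a : ℕ) :
    cnt i r n a ≤ cnt i r n (a + 1) ∧ cnt i r n (a + 1) ≤ cnt i r n a + 1 := by
  rw [cnt_succ]; split <;> omega

lemma cnt_spec (i : Fin m) (r : GRun L m) (n : ℕ) : ∀ a, ∃ t,
    futureIdx i r n (cnt i r n a) = some t ∧ t ≤ n + a ∧
      ∀ k, t ≤ k → k ≤ n + a → (r k).2 i = (r t).2 i := by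
  intro a
  induction a with
  | zero =>
    refine ⟨n, rfl, by omega, ?_⟩
    intro k hk hk'
    have : k = n := by omega
    rw [this]
  | succ a ih =>
    obtain ⟨t, ht, hle, hconst⟩ := ih
    by_cases hc : (r (n + a + 1)).2 i = (r (n + a)).2 i
    · refine ⟨t, ?_, by omega, ?_⟩
      · rw [cnt_succ, if_pos hc]; exact ht
      · intro k hk hk'
        rcases Nat.lt_or_ge k (n + a + 1) with h | h
        · exact hconst k hk (by omega)
        · have : k = n + a + 1 := by omega
          rw [this, hc]
          exact hconst (n + a) hle (le_refl _)
    · have hex : ∃ k, t < k ∧ (r k).2 i ≠ (r t).2 i := by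
        refine ⟨n + a + 1, by omega, fun he => hc ?_⟩
        rw [he, hconst (n + a) hle (le_refl _)]
      have hfind : Nat.find hex = n + a + 1 := by
        rw [Nat.find_eq_iff]
        refine ⟨⟨by omega, fun he => hc ?_⟩, ?_⟩
        · rw [he, hconst (n + a) hle (le_refl _)]
        · intro k hk
          rintro ⟨hk1, hk2⟩
          exact hk2 (hconst k (by omega) (by omega))
      refine ⟨n + a + 1, ?_, le_refl _, ?_⟩
      · rw [cnt_succ, if_neg hc, futureIdx_succ_eq, ht]
        rw [Option.bind_some]
        rw [dif_pos hex, hfind]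
      · intro k hk hk'
        have : k = n + a + 1 := by omega
        rw [this]

lemma cnt_of_futureIdx (i : Fin m) (r : GRun L m) (n : ℕ) :
    ∀ j t, futureIdx i r n j = some t → cnt i r n (t - n) = j := by
  intro j
  induction j with
  | zero =>
    intro t h
    rw [futureIdx_zero] at h
    have : t = n := (Option.some.inj h).symm
    rw [this]
    simp [cnt_zero]
  | succ j ih =>
    intro t h
    rw [futureIdx_succ_eq] at h
    cases hft : futureIdx i r n j with
    | none => rw [hft] at h; simp at h
    | some u =>
      rw [hft] at h
      rw [Option.bind_some] at h
      split at h
      case isTrue hex =>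
        have ht : Nat.find hex = t := Option.some.inj h
        have hut : u < t := by rw [← ht]; exact (Nat.find_spec hex).1
        have hne : (r t).2 i ≠ (r u).2 i := by rw [← ht]; exact (Nat.find_spec hex).2
        have hconst : ∀ k, u ≤ k → k < t → (r k).2 i = (r u).2 i := by
          intro k hk1 hk2
          rcases Nat.eq_or_lt_of_le hk1 with h' | h'
          · rw [← h']
          · have := Nat.find_min hex (m := k) (by omega)
            by_contra hcon
            exact this ⟨h', hcon⟩
        have hnu : n ≤ u := futureIdx_ge i r n j u hft
        have ihu : cnt i r n (u - n) = j := ih u hft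
        have key : ∀ d, u + d < t → cnt i r n (u - n + d) = j := by
          intro d
          induction d with
          | zero => intro _; simpa using ihu
          | succ d ihd =>
            intro hd
            have e1 : n + (u - n + d) + 1 = u + d + 1 := by omega
            have e2 : n + (u - n + d) = u + d := by omega
            rw [← Nat.add_assoc, cnt_succ, e1, e2,
              if_pos (by rw [hconst (u + d + 1) (by omega) (by omega),
                hconst (u + d) (by omega) (by omega)]), ihd (by omega)]
            omega
        have hlast : cnt i r n (u - n + (t - u - 1) + 1) = j + 1 := by
          have e1 : n + (u - n + (t - u - 1)) + 1 = t := by omega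
          have e2 : n + (u - n + (t - u - 1)) = t - 1 := by omega
          rw [cnt_succ, e1, e2,
            if_neg (by rw [hconst (t - 1) (by omega) (by omega)]; exact hne),
            key (t - u - 1) (by omega)]
        have e3 : u - n + (t - u - 1) + 1 = t - n := by omega
        rw [← e3]
        exact hlast
      case isFalse => simp at h

lemma futureSeq_eq (i : Fin m) (r : GRun L m) (n j : ℕ) :
    futureSeq i r n j = (futureIdx i r n j).map fun t => (r t).2 i := rfl

end Aux


lemma locEq_symm {L : Type} {m : ℕ} {i : Fin m} {r : GRun L m} {n : ℕ}
    {r' : GRun L m} {n' : ℕ} (h : locEq i r n r' n') : locEq i r' n' r n := Eq.symm h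

lemma futureIdx_one {L : Type} {m : ℕ} (i : Fin m) (r : GRun L m) (n : ℕ) :
    futureIdx i r n 1 =
      if h : ∃ k, n < k ∧ (r k).2 i ≠ (r n).2 i then some (Nat.find h) else none := by
  rw [futureIdx_succ_eq, futureIdx_zero, Option.bind_some]

lemma step_dichotomy {L : Type} {m : ℕ} {R : Set (GRun L m)} {i : Fin m}
    (H3 : ∀ r ∈ R, ∀ r' ∈ R, ∀ n n' : ℕ, locEq i r n r' n' →
      (locEq i r (n + 1) r' n' ∨ ∃ l : ℕ, n' < l ∧ locEq i r (n + 1) r' l ∧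
        ∀ k : ℕ, n' ≤ k → k < l → locEq i r n r' k))
    {r r' : GRun L m} (hr : r ∈ R) (hr' : r' ∈ R) {n n' : ℕ}
    (hloc : locEq i r n r' n') :
    (futureIdx i r n 1 = none ∧ futureIdx i r' n' 1 = none) ∨
    ∃ t t', futureIdx i r n 1 = some t ∧ futureIdx i r' n' 1 = some t' ∧
      locEq i r t r' t' := by
  simp only [locEq] at hloc
  by_cases hex : ∃ k, n < k ∧ (r k).2 i ≠ (r n).2 i
  · right
    have h1 := Nat.find_spec hex
    have hconst : ∀ k, n ≤ k → k < Nat.find hex → (r k).2 i = (r n).2 i := by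
      intro k hk1 hk2
      rcases Nat.eq_or_lt_of_le hk1 with h' | h'
      · rw [← h']
      · by_contra hcon
        exact Nat.find_min hex hk2 ⟨h', hcon⟩
    have hloc2 : locEq i r (Nat.find hex - 1) r' n' := by
      show (r (Nat.find hex - 1)).2 i = (r' n').2 i
      rw [hconst (Nat.find hex - 1) (by omega) (by omega)]
      exact hloc
    have e : Nat.find hex - 1 + 1 = Nat.find hex := by omega
    rcases H3 r hr r' hr' (Nat.find hex - 1) n' hloc2 with hL | ⟨l, hl1, hl2, hl3⟩
    · rw [e] at hL
      simp only [locEq] at hL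
      exact absurd (hL.trans hloc.symm) h1.2
    · rw [e] at hl2
      simp only [locEq] at hl2 hl3
      have hex' : ∃ k, n' < k ∧ (r' k).2 i ≠ (r' n').2 i :=
        ⟨l, hl1, fun he => h1.2 (hl2.trans (he.trans hloc.symm))⟩
      refine ⟨Nat.find hex, Nat.find hex', ?_, ?_, ?_⟩
      · rw [futureIdx_one, dif_pos hex]
      · rw [futureIdx_one, dif_pos hex']
      · have hfl : Nat.find hex' = l := by
          rw [Nat.find_eq_iff]
          refine ⟨⟨hl1, fun he => h1.2 (hl2.trans (he.trans hloc.symm))⟩, ?_⟩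
          rintro k hk ⟨hk1, hk2⟩
          apply hk2
          rw [← hl3 k (le_of_lt hk1) hk,
            hconst (Nat.find hex - 1) (by omega) (by omega)]
          exact hloc
        show (r (Nat.find hex)).2 i = (r' (Nat.find hex')).2 i
        rw [hfl]
        exact hl2
  · left
    refine ⟨by rw [futureIdx_one, dif_neg hex], ?_⟩
    rw [futureIdx_one, dif_neg]
    intro hex'
    push_neg at hex
    have h1 := Nat.find_spec hex'
    have hconst : ∀ k, n' ≤ k → k < Nat.find hex' → (r' k).2 i = (r' n').2 i := by
      intro k hk1 hk2
      rcases Nat.eq_or_lt_of_le hk1 with h' | h'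
      · rw [← h']
      · by_contra hcon
        exact Nat.find_min hex' hk2 ⟨h', hcon⟩
    have hloc2 : locEq i r' (Nat.find hex' - 1) r n := by
      show (r' (Nat.find hex' - 1)).2 i = (r n).2 i
      rw [hconst (Nat.find hex' - 1) (by omega) (by omega)]
      exact hloc.symm
    have e : Nat.find hex' - 1 + 1 = Nat.find hex' := by omega
    rcases H3 r' hr' r hr (Nat.find hex' - 1) n hloc2 with hL | ⟨l, hl1, hl2, hl3⟩
    · rw [e] at hL
      simp only [locEq] at hL
      exact absurd (hL.trans hloc) h1.2
    · rw [e] at hl2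
      simp only [locEq] at hl2
      exact absurd (hl2.trans ((hex l hl1).trans hloc)) h1.2

/-- **Lemma 2.3.** Equivalent characterizations of no learning. -/
theorem noLearning_tfae {L : Type} {m : ℕ} (R : Set (GRun L m)) (i : Fin m) :
    List.TFAE
      [NoLearningSys R i,
       ∀ r ∈ R, ∀ r' ∈ R, ∀ n n' : ℕ, locEq i r n r' n' →
         InfConcordant (fun a b => locEq i r (n + a) r' (n' + b)),
       ∀ r ∈ R, ∀ r' ∈ R, ∀ n n' : ℕ, locEq i r n r' n' →
         (locEq i r (n + 1) r' n' ∨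
           ∃ l : ℕ, n' < l ∧ locEq i r (n + 1) r' l ∧
             ∀ k : ℕ, n' ≤ k → k < l → locEq i r n r' k)] := by
  tfae_have 1 → 2 := by
    intro H1 r hr r' hr' n n' hloc
    refine ⟨cnt i r n, cnt i r' n', cnt_zero i r n, cnt_zero i r' n',
      cnt_climb i r n, cnt_climb i r' n', ?_, ?_⟩
    · intro j
      constructor
      · rintro ⟨a, ha⟩
        obtain ⟨t, ht, -, -⟩ := cnt_spec i r n a
        rw [ha] at ht
        have hfs := H1 r hr r' hr' n n' hloc j
        rw [futureSeq_eq, futureSeq_eq, ht] at hfs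
        cases ht' : futureIdx i r' n' j with
        | none => rw [ht'] at hfs; simp at hfs
        | some t' => exact ⟨t' - n', cnt_of_futureIdx i r' n' j t' ht'⟩
      · rintro ⟨b, hb⟩
        obtain ⟨t', ht', -, -⟩ := cnt_spec i r' n' b
        rw [hb] at ht'
        have hfs := H1 r hr r' hr' n n' hloc j
        rw [futureSeq_eq, futureSeq_eq, ht'] at hfs
        cases ht : futureIdx i r n j with
        | none => rw [ht] at hfs; simp at hfs
        | some t => exact ⟨t - n, cnt_of_futureIdx i r n j t ht⟩
    · intro a b hab
      obtain ⟨t, ht, hle, hc⟩ := cnt_spec i r n a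
      obtain ⟨t', ht', hle', hc'⟩ := cnt_spec i r' n' b
      have hfs := H1 r hr r' hr' n n' hloc (cnt i r n a)
      rw [futureSeq_eq, futureSeq_eq, ht, hab, ht'] at hfs
      simp only [Option.map_some] at hfs
      have heq : (r t).2 i = (r' t').2 i := Option.some.inj hfs
      show (r (n + a)).2 i = (r' (n' + b)).2 i
      rw [hc (n + a) hle (le_refl _), hc' (n' + b) hle' (le_refl _), heq]
  tfae_have 2 → 3 := by
    intro H2 r hr r' hr' n n' hloc
    obtain ⟨f, g, hf0, hg0, hf, hg, hiff, hrel⟩ := H2 r hr r' hr' n n' hloc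
    have hf1 : f 1 = 0 ∨ f 1 = 1 := by
      have := hf 0
      simp only [Nat.zero_add, hf0] at this
      omega
    rcases hf1 with hf1 | hf1
    · left
      have := hrel 1 0 (by rw [hf1, hg0])
      simpa using this
    · right
      have hexb : ∃ b, g b = 1 := (hiff 1).mp ⟨1, hf1⟩
      have hb := Nat.find_spec hexb
      have hzero : ∀ k, k < Nat.find hexb → g k = 0 := by
        intro k
        induction k with
        | zero => intro _; exact hg0
        | succ k ihk =>
          intro hk
          have h1 := ihk (by omega)
          have h2 := hg k
          have h3 : g (k + 1) ≠ 1 := Nat.find_min hexb hk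
          omega
      have hbpos : 0 < Nat.find hexb := by
        rcases Nat.eq_zero_or_pos (Nat.find hexb) with h | h
        · rw [h] at hb; rw [hg0] at hb; omega
        · exact h
      refine ⟨n' + Nat.find hexb, by omega, hrel 1 (Nat.find hexb) (by rw [hf1, hb]), ?_⟩
      intro k hk1 hk2
      obtain ⟨k₀, rfl⟩ : ∃ k₀, k = n' + k₀ := ⟨k - n', by omega⟩
      exact hrel 0 k₀ (by rw [hf0, hzero k₀ (by omega)])
  tfae_have 3 → 1 := by
    intro H3
    have main : ∀ j, ∀ r ∈ R, ∀ r' ∈ R, ∀ n n', locEq i r n r' n' →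
        futureSeq i r n j = futureSeq i r' n' j := by
      intro j
      induction j with
      | zero =>
        intro r hr r' hr' n n' hloc
        rw [futureSeq_eq, futureSeq_eq, futureIdx_zero, futureIdx_zero]
        simp only [Option.map_some]
        exact congrArg some hloc
      | succ j ih =>
        intro r hr r' hr' n n' hloc
        rcases step_dichotomy H3 hr hr' hloc with ⟨h1, h2⟩ | ⟨t, t', h1, h2, hloc'⟩
        · rw [futureSeq_eq, futureSeq_eq, futureIdx_one_none i r n h1 j,
            futureIdx_one_none i r' n' h2 j]
          rfl
        · rw [futureSeq_eq, futureSeq_eq, futureIdx_shift i r n t h1 j,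
            futureIdx_shift i r' n' t' h2 j]
          exact ih r hr r' hr' t t' hloc'
    intro r hr r' hr' n n' hloc j
    exact main j r hr r' hr' n n' hloc
  tfae_finish


end HalpernVardiMeyden
end

section
/- Every instance of the axiom scheme KT2, namely K_i○φ ⇒ ○K_iφ for i = 1,...,m, is valid with respect to C_m^{pr,sync}, the class of synchronous interpreted systems for m agents in which every agent has perfect recall. -/
namespace HalpernVardiMeyden

open scoped Classical

/-- An interpreted system for `m` agents: a type of local states, a set of runs, and a
valuation assigning a truth value to each primitive proposition at each point. -/
structure IntSystem (m : ℕ) where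
  L : Type
  runs : Set (GRun L m)
  val : GRun L m → ℕ → ℕ → Prop

namespace IntSystem

variable {m : ℕ}

/-- The interpreted system `I` is synchronous. -/
def Sync (I : IntSystem m) : Prop := SyncSys I.runs

/-- The interpreted system `I` has a unique initial state. -/
def UIS (I : IntSystem m) : Prop := UISSys I.runs

/-- Agent `i` has perfect recall in the interpreted system `I`. -/
def PerfectRecall (I : IntSystem m) (i : Fin m) : Prop := PerfectRecallSys I.runs i

/-- Agent `i` does not learn in the interpreted system `I`. -/
def NoLearning (I : IntSystem m) (i : Fin m) : Prop := NoLearningSys I.runs i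

end IntSystem

/-- Formulas of the language `KL_m`: primitive propositions, negation, conjunction,
knowledge modalities `K_i`, next `○`, and until `U`. -/
inductive KL (m : ℕ) : Type
  | prim : ℕ → KL m
  | neg : KL m → KL m
  | conj : KL m → KL m → KL m
  | know : Fin m → KL m → KL m
  | next : KL m → KL m
  | untl : KL m → KL m → KL m

namespace KL

/-- Material implication, as an abbreviation: `φ ⇒ ψ := ¬(φ ∧ ¬ψ)`. -/
def imp {m : ℕ} (φ ψ : KL m) : KL m := neg (conj φ (neg ψ))

/-- Disjunction, as an abbreviation: `φ ∨ ψ := ¬(¬φ ∧ ¬ψ)`. -/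
def disj {m : ℕ} (φ ψ : KL m) : KL m := neg (conj (neg φ) (neg ψ))

/-- Biimplication, as an abbreviation. -/
def biimp {m : ℕ} (φ ψ : KL m) : KL m := conj (imp φ ψ) (imp ψ φ)

/-- `L_i φ` abbreviates `¬ K_i ¬ φ`. -/
def poss {m : ℕ} (i : Fin m) (φ : KL m) : KL m := neg (know i (neg φ))

/-- `true` abbreviates `¬(p ∧ ¬p)` for a fixed primitive proposition `p`. -/
def tru {m : ℕ} : KL m := neg (conj (prim 0) (neg (prim 0)))

/-- `◇φ` abbreviates `true U φ`. -/
def diam {m : ℕ} (φ : KL m) : KL m := untl tru φ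

/-- `□φ` abbreviates `¬◇¬φ`. -/
def box {m : ℕ} (φ : KL m) : KL m := neg (diam (neg φ))

/-- A formula of `KL_m` is a propositional tautology if it evaluates to `true` under
every Boolean valuation of formulas that respects negation and conjunction
(treating primitive propositions and formulas whose outermost operator is a
modality as atoms). -/
def IsTautology {m : ℕ} (φ : KL m) : Prop :=
  ∀ v : KL m → Bool,
    (∀ ψ : KL m, v (neg ψ) = !v ψ) →
    (∀ ψ χ : KL m, v (conj ψ χ) = (v ψ && v χ)) →
    v φ = true

end KL

/-- Provability in the proof system obtained from `S5^U_m` (axioms K1–K5, T1–T3 and rules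
R1, R2, RT1, RT2) by adding every formula satisfying `Ax` as an extra axiom. -/
inductive Prov {m : ℕ} (Ax : KL m → Prop) : KL m → Prop
  | extra {φ : KL m} : Ax φ → Prov Ax φ
  | K1 {φ : KL m} : φ.IsTautology → Prov Ax φ
  | K2 (i : Fin m) (φ ψ : KL m) :
      Prov Ax (((KL.know i φ).conj (KL.know i (φ.imp ψ))).imp (KL.know i ψ))
  | K3 (i : Fin m) (φ : KL m) : Prov Ax ((KL.know i φ).imp φ)
  | K4 (i : Fin m) (φ : KL m) :
      Prov Ax ((KL.know i φ).imp (KL.know i (KL.know i φ)))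
  | K5 (i : Fin m) (φ : KL m) :
      Prov Ax ((KL.neg (KL.know i φ)).imp (KL.know i (KL.neg (KL.know i φ))))
  | T1 (φ ψ : KL m) :
      Prov Ax (((KL.next φ).conj (KL.next (φ.imp ψ))).imp (KL.next ψ))
  | T2 (φ : KL m) : Prov Ax ((KL.next (KL.neg φ)).imp (KL.neg (KL.next φ)))
  | T3 (φ ψ : KL m) :
      Prov Ax ((φ.untl ψ).biimp (ψ.disj (φ.conj (KL.next (φ.untl ψ)))))
  | R1 {φ ψ : KL m} : Prov Ax φ → Prov Ax (φ.imp ψ) → Prov Ax ψ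
  | R2 (i : Fin m) {φ : KL m} : Prov Ax φ → Prov Ax (KL.know i φ)
  | RT1 {φ : KL m} : Prov Ax φ → Prov Ax (KL.next φ)
  | RT2 {φ' φ ψ : KL m} :
      Prov Ax (φ'.imp ((KL.neg ψ).conj (KL.next φ'))) →
      Prov Ax (φ'.imp (KL.neg (φ.untl ψ)))

/-- The empty set of extra axioms: `Prov NoAx` is provability in `S5^U_m` itself. -/
def NoAx {m : ℕ} : KL m → Prop := fun _ => False

/-- Instances of the axiom scheme KT2: `K_i ○φ ⇒ ○ K_i φ`. -/
def KT2Ax {m : ℕ} (χ : KL m) : Prop :=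
  ∃ (i : Fin m) (φ : KL m),
    χ = (KL.know i (KL.next φ)).imp (KL.next (KL.know i φ))

/-- Instances of the axiom scheme KT3:
`K_iφ₁ ∧ ○(K_iφ₂ ∧ ¬K_iφ₃) ⇒ L_i((K_iφ₁) U ((K_iφ₂) U ¬φ₃))`. -/
def KT3Ax {m : ℕ} (χ : KL m) : Prop :=
  ∃ (i : Fin m) (φ₁ φ₂ φ₃ : KL m),
    χ = ((KL.know i φ₁).conj
          (KL.next ((KL.know i φ₂).conj (KL.neg (KL.know i φ₃))))).imp
        (KL.poss i ((KL.know i φ₁).untl ((KL.know i φ₂).untl (KL.neg φ₃))))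

/-- Instances of the axiom scheme KT4: `(K_iφ) U (K_iψ) ⇒ K_i((K_iφ) U (K_iψ))`. -/
def KT4Ax {m : ℕ} (χ : KL m) : Prop :=
  ∃ (i : Fin m) (φ ψ : KL m),
    χ = ((KL.know i φ).untl (KL.know i ψ)).imp
          (KL.know i ((KL.know i φ).untl (KL.know i ψ)))

/-- Instances of the axiom scheme KT5: `○ K_i φ ⇒ K_i ○φ`. -/
def KT5Ax {m : ℕ} (χ : KL m) : Prop :=
  ∃ (i : Fin m) (φ : KL m),
    χ = (KL.next (KL.know i φ)).imp (KL.know i (KL.next φ))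

/-- Satisfaction of a `KL_m` formula at a point `(r,n)` of an interpreted system. -/
def IntSystem.sat {m : ℕ} (I : IntSystem m) : KL m → GRun I.L m → ℕ → Prop
  | .prim p, r, n => I.val r n p
  | .neg φ, r, n => ¬ I.sat φ r n
  | .conj φ ψ, r, n => I.sat φ r n ∧ I.sat ψ r n
  | .know i φ, r, n => ∀ r' ∈ I.runs, ∀ n' : ℕ, locEq i r n r' n' → I.sat φ r' n'
  | .next φ, r, n => I.sat φ r (n + 1)
  | .untl φ ψ, r, n =>
      ∃ n' : ℕ, n ≤ n' ∧ I.sat ψ r n' ∧ ∀ k : ℕ, n ≤ k → k < n' → I.sat φ r k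

/-- A `KL_m` formula is valid with respect to a class `C` of interpreted systems if it is
satisfied at every point of every system in `C`. -/
def valid {m : ℕ} (C : Set (IntSystem m)) (φ : KL m) : Prop :=
  ∀ I ∈ C, ∀ r ∈ I.runs, ∀ n : ℕ, I.sat φ r n

/-- A `KL_m` formula is satisfiable with respect to a class `C` of interpreted systems
if it is satisfied at some point of some system in `C`. -/
def satisfiable {m : ℕ} (C : Set (IntSystem m)) (φ : KL m) : Prop :=
  ∃ I ∈ C, ∃ r ∈ I.runs, ∃ n : ℕ, I.sat φ r n

theorem dedup_eq_self {L : Type} : ∀ l : List L, List.Chain' (· ≠ ·) l → dedup l = l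
  | [], _ => rfl
  | [a], _ => rfl
  | a :: b :: l, h => by
      change List.IsChain _ _ at h
      rw [List.isChain_cons_cons] at h
      rw [dedup, if_neg h.1, dedup_eq_self (b :: l) h.2]

/-- **Lemma 5.5.** Every instance of the axiom scheme KT2 is valid with respect to
`C_m^{pr,sync}`, the class of synchronous interpreted systems in which every agent has
perfect recall. -/
theorem KT2_valid_pr_sync (m : ℕ) (χ : KL m) (h : KT2Ax χ) :
    valid {I : IntSystem m | (∀ i, I.PerfectRecall i) ∧ I.Sync} χ := by
  obtain ⟨i, φ, rfl⟩ := h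
  rintro I ⟨hpr, hsync⟩ r hr n
  -- unfold implication
  simp only [KL.imp, IntSystem.sat, not_and, not_not]
  intro hK r' hr' n' hloc
  -- synchrony: n' = n + 1
  have hn' : n + 1 = n' := hsync i r hr r' hr' (n + 1) n' hloc
  subst hn'
  -- within-run distinctness from synchrony
  have hdist : ∀ (s : GRun I.L m), s ∈ I.runs → ∀ k k' : ℕ,
      (s k).2 i = (s k').2 i → k = k' := fun s hs k k' hkk =>
    hsync i s hs s hs k k' hkk
  have hchain : ∀ (s : GRun I.L m), s ∈ I.runs →
      List.Chain' (· ≠ ·) ((List.range (n + 2)).map fun k => (s k).2 i) := by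
    intro s hs
    change List.IsChain _ _
    rw [List.isChain_map]
    apply (List.isChain_range_succ _ _).2
    intro k _ hkk
    exact absurd (hdist s hs k (k + 1) hkk) (Nat.ne_of_lt (Nat.lt_succ_self k))
  -- perfect recall: equal local-state sequences at time n+1
  have hls : lsSeq i r (n + 1) = lsSeq i r' (n + 1) :=
    hpr i r hr r' hr' (n + 1) (n + 1) hloc
  unfold lsSeq at hls
  rw [dedup_eq_self _ (hchain r hr), dedup_eq_self _ (hchain r' hr')] at hls
  -- extract equality at index n
  have hln : ((List.range (n + 2)).map fun k => (r k).2 i)[n]? =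
      ((List.range (n + 2)).map fun k => (r' k).2 i)[n]? := by rw [hls]
  have hrange : (List.range (n + 2))[n]? = some n := by
    rw [List.getElem?_range (by omega)]
  rw [List.getElem?_map, List.getElem?_map, hrange] at hln
  have hlocn : locEq i r n r' n := by
    simpa [locEq] using hln
  exact hK r' hr' n hlocn

end HalpernVardiMeyden
end

section
/- Every instance of the axiom scheme KT5, namely ○K_iφ ⇒ K_i○φ for i = 1,...,m, is valid with respect to C_m^{nl,sync}, the class of synchronous interpreted systems for m agents in which no agent learns. -/
namespace HalpernVardiMeyden

open scoped Classical

lemma step_locEq_aux {L : Type} {m : ℕ} {R : Set (GRun L m)} {i : Fin m}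
    (hsync : SyncSys R) (hnl : NoLearningSys R i)
    {r r' : GRun L m} (hr : r ∈ R) (hr' : r' ∈ R) {n : ℕ}
    (he : locEq i r n r' n) (hne : (r (n+1)).2 i ≠ (r n).2 i) :
    locEq i r (n+1) r' (n+1) := by
  have h : ∃ k, n < k ∧ (r k).2 i ≠ (r n).2 i := ⟨n+1, Nat.lt_succ_self n, hne⟩
  have hfind : Nat.find h = n + 1 :=
    le_antisymm (Nat.find_le ⟨Nat.lt_succ_self n, hne⟩) (Nat.find_spec h).1
  have h1 : futureIdx i r n 1 = some (n+1) := by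
    show (futureIdx i r n 0).bind _ = _
    simp [futureIdx, h, hfind]
  have h2 : futureSeq i r n 1 = some ((r (n+1)).2 i) := by
    simp [futureSeq, h1]
  have h3 := hnl r hr r' hr' n n he 1
  rw [h2] at h3
  obtain ⟨t, ht, hat⟩ : ∃ t, futureIdx i r' n 1 = some t ∧
      (r' t).2 i = (r (n+1)).2 i := by
    cases hidx : futureIdx i r' n 1 with
    | none => simp [futureSeq, hidx] at h3
    | some t =>
      refine ⟨t, rfl, ?_⟩
      simpa [futureSeq, hidx] using h3.symm
  have hloc : locEq i r (n+1) r' t := hat.symm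
  have ht2 := hsync i r hr r' hr' (n+1) t hloc
  subst ht2
  exact hloc

lemma step_locEq {L : Type} {m : ℕ} {R : Set (GRun L m)} {i : Fin m}
    (hsync : SyncSys R) (hnl : NoLearningSys R i)
    {r r' : GRun L m} (hr : r ∈ R) (hr' : r' ∈ R) {n : ℕ}
    (he : locEq i r n r' n) : locEq i r (n+1) r' (n+1) := by
  by_cases h1 : (r (n+1)).2 i = (r n).2 i
  · by_cases h2 : (r' (n+1)).2 i = (r' n).2 i
    · exact h1.trans (he.trans h2.symm)
    · exact (step_locEq_aux hsync hnl hr' hr he.symm h2).symm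
  · exact step_locEq_aux hsync hnl hr hr' he h1

/-- **Lemma 5.15.** Every instance of the axiom scheme KT5 is valid with respect to
`C_m^{nl,sync}`, the class of synchronous interpreted systems in which no agent
learns. -/
theorem KT5_valid_nl_sync (m : ℕ) (χ : KL m) (h : KT5Ax χ) :
    valid {I : IntSystem m | (∀ i, I.NoLearning i) ∧ I.Sync} χ := by
  obtain ⟨i, φ, rfl⟩ := h
  rintro I ⟨hnl, hsync⟩ r hr n
  simp only [KL.imp, IntSystem.sat, not_and, not_not]
  intro hA
  intro r' hr' n' he
  have hnn' : n = n' := hsync i r hr r' hr' n n' he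
  subst hnn'
  have hstep : locEq i r (n+1) r' (n+1) := step_locEq hsync (hnl i) hr hr' he
  exact hA r' hr' (n+1) hstep

end HalpernVardiMeyden
end

section
/- Let L be any proof system obtained from S5^U_m by adding further axiom schemes. For all formulas α, β, γ of KL_m: if ⊢_L α ⇒ ¬γ and ⊢_L α ⇒ ○(α ∨ (¬β ∧ ¬γ)), then ⊢_L α ⇒ ¬(β U γ). -/
namespace HalpernVardiMeyden

open scoped Classical

/-- Monotonicity of `○`: from `⊢ A ⇒ B` infer `⊢ ○A ⇒ ○B`. -/
lemma next_mono {m : ℕ} {Ax : KL m → Prop} {A B : KL m}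
    (h : Prov Ax (A.imp B)) :
    Prov Ax ((KL.next A).imp (KL.next B)) := by
  have hX : Prov Ax (KL.next (A.imp B)) := Prov.RT1 h
  have t1 := Prov.T1 (Ax := Ax) A B
  -- tautology: X ⇒ ((○A ∧ X ⇒ ○B) ⇒ (○A ⇒ ○B))
  have taut : Prov Ax ((KL.next (A.imp B)).imp
      ((((KL.next A).conj (KL.next (A.imp B))).imp (KL.next B)).imp
        ((KL.next A).imp (KL.next B)))) := by
    apply Prov.K1
    intro v hn hc
    have hi : ∀ ψ χ : KL m, v (ψ.imp χ) = (!(v ψ) || v χ) := by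
      intro ψ χ; simp [KL.imp, hn, hc]
    have hd : ∀ ψ χ : KL m, v (ψ.disj χ) = (v ψ || v χ) := by
      intro ψ χ; simp [KL.disj, hn, hc]
    simp only [hi, hn, hc]
    cases v (KL.next (A.imp B)) <;> cases v (KL.next A) <;> cases v (KL.next B) <;> simp
  exact Prov.R1 t1 (Prov.R1 hX taut)

/-- `⊢ ○A ∧ ○B ⇒ ○(A ∧ B)`. -/
lemma next_conj {m : ℕ} {Ax : KL m → Prop} (A B : KL m) :
    Prov Ax (((KL.next A).conj (KL.next B)).imp (KL.next (A.conj B))) := by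
  have hs : Prov Ax (KL.next (A.imp (B.imp (A.conj B)))) := by
    apply Prov.RT1
    apply Prov.K1
    intro v hn hc
    have hi : ∀ ψ χ : KL m, v (ψ.imp χ) = (!(v ψ) || v χ) := by
      intro ψ χ; simp [KL.imp, hn, hc]
    have hd : ∀ ψ χ : KL m, v (ψ.disj χ) = (v ψ || v χ) := by
      intro ψ χ; simp [KL.disj, hn, hc]
    simp only [hi, hn, hc]
    cases v A <;> cases v B <;> simp
  have t1 := Prov.T1 (Ax := Ax) A (B.imp (A.conj B))
  have t2 := Prov.T1 (Ax := Ax) B (A.conj B)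
  have taut : Prov Ax ((KL.next (A.imp (B.imp (A.conj B)))).imp
      (((((KL.next A).conj (KL.next (A.imp (B.imp (A.conj B))))).imp
          (KL.next (B.imp (A.conj B))))).imp
        (((((KL.next B).conj (KL.next (B.imp (A.conj B)))).imp
            (KL.next (A.conj B)))).imp
          (((KL.next A).conj (KL.next B)).imp (KL.next (A.conj B)))))) := by
    apply Prov.K1
    intro v hn hc
    have hi : ∀ ψ χ : KL m, v (ψ.imp χ) = (!(v ψ) || v χ) := by
      intro ψ χ; simp [KL.imp, hn, hc]
    have hd : ∀ ψ χ : KL m, v (ψ.disj χ) = (v ψ || v χ) := by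
      intro ψ χ; simp [KL.disj, hn, hc]
    simp only [hi, hn, hc]
    cases v (KL.next (A.imp (B.imp (A.conj B)))) <;>
      cases v (KL.next (B.imp (A.conj B))) <;>
      cases v (KL.next A) <;> cases v (KL.next B) <;>
      cases v (KL.next (A.conj B)) <;> simp
  exact Prov.R1 t2 (Prov.R1 t1 (Prov.R1 hs taut))

/-- **Lemma 4.5.** Let `L` be any proof system obtained from `S5^U_m` by adding further
axiom schemes (here: all formulas satisfying `Ax`).  If `⊢_L α ⇒ ¬γ` and
`⊢_L α ⇒ ○(α ∨ (¬β ∧ ¬γ))`, then `⊢_L α ⇒ ¬(β U γ)`. -/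
theorem until_lemma (m : ℕ) (Ax : KL m → Prop) (α β γ : KL m)
    (h1 : Prov Ax (α.imp (KL.neg γ)))
    (h2 : Prov Ax (α.imp (KL.next (α.disj ((KL.neg β).conj (KL.neg γ)))))) :
    Prov Ax (α.imp (KL.neg (β.untl γ))) := by
  set U : KL m := β.untl γ with hU
  set E : KL m := α.disj ((KL.neg β).conj (KL.neg γ)) with hE
  set D : KL m := α.conj U with hD
  have t3 := Prov.T3 (Ax := Ax) β γ
  -- P1 : D ⇒ ¬γ ∧ (α ∧ ○U)
  have P1 : Prov Ax (D.imp ((KL.neg γ).conj (α.conj (KL.next U)))) := by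
    have taut : Prov Ax ((α.imp (KL.neg γ)).imp
        ((U.biimp (γ.disj (β.conj (KL.next U)))).imp
          (D.imp ((KL.neg γ).conj (α.conj (KL.next U)))))) := by
      apply Prov.K1
      intro v hn hc
      have hi : ∀ ψ χ : KL m, v (ψ.imp χ) = (!(v ψ) || v χ) := by
        intro ψ χ; simp [KL.imp, hn, hc]
      have hd : ∀ ψ χ : KL m, v (ψ.disj χ) = (v ψ || v χ) := by
        intro ψ χ; simp [KL.disj, hn, hc]
      simp only [hD, hU, hE, KL.biimp, hi, hd, hn, hc]
      cases v α <;> cases v γ <;> cases v β <;>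
        cases v (β.untl γ) <;> cases v (KL.next (β.untl γ)) <;> simp
    exact Prov.R1 t3 (Prov.R1 h1 taut)
  -- P3 : ○U ∧ ○E ⇒ ○(U ∧ E)
  have P3 : Prov Ax (((KL.next U).conj (KL.next E)).imp (KL.next (U.conj E))) :=
    next_conj U E
  -- U ∧ E ⇒ D, hence P4 : ○(U ∧ E) ⇒ ○D
  have hUE : Prov Ax ((U.conj E).imp D) := by
    have taut : Prov Ax ((U.biimp (γ.disj (β.conj (KL.next U)))).imp
        ((U.conj E).imp D)) := by
      apply Prov.K1
      intro v hn hc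
      have hi : ∀ ψ χ : KL m, v (ψ.imp χ) = (!(v ψ) || v χ) := by
        intro ψ χ; simp [KL.imp, hn, hc]
      have hd : ∀ ψ χ : KL m, v (ψ.disj χ) = (v ψ || v χ) := by
        intro ψ χ; simp [KL.disj, hn, hc]
      simp only [hD, hU, hE, KL.biimp, hi, hd, hn, hc]
      cases v α <;> cases v γ <;> cases v β <;>
        cases v (β.untl γ) <;> cases v (KL.next (β.untl γ)) <;> simp
    exact Prov.R1 t3 taut
  have P4 : Prov Ax ((KL.next (U.conj E)).imp (KL.next D)) := next_mono hUE
  -- glue : D ⇒ ¬γ ∧ ○D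
  have glue : Prov Ax (D.imp ((KL.neg γ).conj (KL.next D))) := by
    have taut : Prov Ax ((D.imp ((KL.neg γ).conj (α.conj (KL.next U)))).imp
        ((α.imp (KL.next E)).imp
          ((((KL.next U).conj (KL.next E)).imp (KL.next (U.conj E))).imp
            (((KL.next (U.conj E)).imp (KL.next D)).imp
              (D.imp ((KL.neg γ).conj (KL.next D))))))) := by
      apply Prov.K1
      intro v hn hc
      have hi : ∀ ψ χ : KL m, v (ψ.imp χ) = (!(v ψ) || v χ) := by
        intro ψ χ; simp [KL.imp, hn, hc]
      have hd : ∀ ψ χ : KL m, v (ψ.disj χ) = (v ψ || v χ) := by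
        intro ψ χ; simp [KL.disj, hn, hc]
      simp only [hD, hU, hE, hi, hd, hn, hc]
      cases v α <;> cases v γ <;> cases v (β.untl γ) <;>
        cases v (KL.next (β.untl γ)) <;>
        cases v (KL.next (α.disj ((KL.neg β).conj (KL.neg γ)))) <;>
        cases v (KL.next ((β.untl γ).conj (α.disj ((KL.neg β).conj (KL.neg γ))))) <;>
        cases v (KL.next (α.conj (β.untl γ))) <;> simp
    exact Prov.R1 P4 (Prov.R1 P3 (Prov.R1 h2 (Prov.R1 P1 taut)))
  have hrt2 : Prov Ax (D.imp (KL.neg (β.untl γ))) := Prov.RT2 glue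
  have taut : Prov Ax ((D.imp (KL.neg (β.untl γ))).imp
      (α.imp (KL.neg (β.untl γ)))) := by
    apply Prov.K1
    intro v hn hc
    have hi : ∀ ψ χ : KL m, v (ψ.imp χ) = (!(v ψ) || v χ) := by
      intro ψ χ; simp [KL.imp, hn, hc]
    have hd : ∀ ψ χ : KL m, v (ψ.disj χ) = (v ψ || v χ) := by
      intro ψ χ; simp [KL.disj, hn, hc]
    simp only [hD, hU, hi, hn, hc]
    cases v α <;> cases v (β.untl γ) <;> simp
  exact Prov.R1 hrt2 taut

end HalpernVardiMeyden
end

section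
/- Let x be a subset of {pr, sync}. If a formula φ of CKL_m is satisfiable with respect to C_m^x (the class of interpreted systems for m agents all of whose agents satisfy the properties in x), then φ is also satisfiable with respect to C_m^{x,uis} (the subclass whose systems additionally have a unique initial state). In particular: satisfiability with respect to C_m implies satisfiability with respect to C_m^{uis}; with respect to C_m^{pr} implies C_m^{pr,uis}; with respect to C_m^{sync} implies C_m^{sync,uis}; and with respect to C_m^{pr,sync} implies C_m^{pr,sync,uis}. -/
namespace HalpernVardiMeyden

open scoped Classical

/-- Formulas of the language `CKL_m`: primitive propositions, negation, conjunction,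
knowledge modalities `K_i`, `E` ('everyone knows'), `C` ('common knowledge'),
next `○`, and until `U`. -/
inductive CKL (m : ℕ) : Type
  | prim : ℕ → CKL m
  | neg : CKL m → CKL m
  | conj : CKL m → CKL m → CKL m
  | know : Fin m → CKL m → CKL m
  | ev : CKL m → CKL m
  | comm : CKL m → CKL m
  | next : CKL m → CKL m
  | untl : CKL m → CKL m → CKL m

namespace CKL

/-- Material implication, as an abbreviation: `φ ⇒ ψ := ¬(φ ∧ ¬ψ)`. -/
def imp {m : ℕ} (φ ψ : CKL m) : CKL m := neg (conj φ (neg ψ))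

/-- Disjunction, as an abbreviation: `φ ∨ ψ := ¬(¬φ ∧ ¬ψ)`. -/
def disj {m : ℕ} (φ ψ : CKL m) : CKL m := neg (conj (neg φ) (neg ψ))

/-- Biimplication, as an abbreviation. -/
def biimp {m : ℕ} (φ ψ : CKL m) : CKL m := conj (imp φ ψ) (imp ψ φ)

/-- `true` abbreviates `¬(p ∧ ¬p)` for a fixed primitive proposition `p`. -/
def tru {m : ℕ} : CKL m := neg (conj (prim 0) (neg (prim 0)))

/-- The conjunction `K_1 φ ∧ … ∧ K_m φ`. -/
def knowAll {m : ℕ} (φ : CKL m) : CKL m :=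
  (List.finRange m).foldr (fun i ψ => conj (know i φ) ψ) tru

/-- A formula of `CKL_m` is a propositional tautology if it evaluates to `true` under
every Boolean valuation of formulas that respects negation and conjunction. -/
def IsTautology {m : ℕ} (φ : CKL m) : Prop :=
  ∀ v : CKL m → Bool,
    (∀ ψ : CKL m, v (neg ψ) = !v ψ) →
    (∀ ψ χ : CKL m, v (conj ψ χ) = (v ψ && v χ)) →
    v φ = true

end CKL

/-- Provability in the proof system `S5C^U_m`: the axioms K1–K5, T1–T3, C1, C2 and the
rules R1, R2, RT1, RT2, RC1. -/
inductive ProvC {m : ℕ} : CKL m → Prop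
  | K1 {φ : CKL m} : φ.IsTautology → ProvC φ
  | K2 (i : Fin m) (φ ψ : CKL m) :
      ProvC (((CKL.know i φ).conj (CKL.know i (φ.imp ψ))).imp (CKL.know i ψ))
  | K3 (i : Fin m) (φ : CKL m) : ProvC ((CKL.know i φ).imp φ)
  | K4 (i : Fin m) (φ : CKL m) :
      ProvC ((CKL.know i φ).imp (CKL.know i (CKL.know i φ)))
  | K5 (i : Fin m) (φ : CKL m) :
      ProvC ((CKL.neg (CKL.know i φ)).imp (CKL.know i (CKL.neg (CKL.know i φ))))
  | T1 (φ ψ : CKL m) :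
      ProvC (((CKL.next φ).conj (CKL.next (φ.imp ψ))).imp (CKL.next ψ))
  | T2 (φ : CKL m) : ProvC ((CKL.next (CKL.neg φ)).imp (CKL.neg (CKL.next φ)))
  | T3 (φ ψ : CKL m) :
      ProvC ((φ.untl ψ).biimp (ψ.disj (φ.conj (CKL.next (φ.untl ψ)))))
  | C1 (φ : CKL m) : ProvC ((CKL.ev φ).biimp (CKL.knowAll φ))
  | C2 (φ : CKL m) :
      ProvC ((CKL.comm φ).imp (CKL.ev (φ.conj (CKL.comm φ))))
  | R1 {φ ψ : CKL m} : ProvC φ → ProvC (φ.imp ψ) → ProvC ψ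
  | R2 (i : Fin m) {φ : CKL m} : ProvC φ → ProvC (CKL.know i φ)
  | RT1 {φ : CKL m} : ProvC φ → ProvC (CKL.next φ)
  | RT2 {φ' φ ψ : CKL m} :
      ProvC (φ'.imp ((CKL.neg ψ).conj (CKL.next φ'))) →
      ProvC (φ'.imp (CKL.neg (φ.untl ψ)))
  | RC1 {φ ψ : CKL m} :
      ProvC (φ.imp (CKL.ev (ψ.conj φ))) → ProvC (φ.imp (CKL.comm ψ))

/-- `EIter I P k` is the `k`-fold application of the 'everyone knows' operator `E` to the
property `P` of points of `I`. -/
def EIter {m : ℕ} (I : IntSystem m) (P : GRun I.L m → ℕ → Prop) :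
    ℕ → GRun I.L m → ℕ → Prop
  | 0, r, n => P r n
  | k + 1, r, n =>
      ∀ i : Fin m, ∀ r' ∈ I.runs, ∀ n' : ℕ, locEq i r n r' n' → EIter I P k r' n'

/-- Satisfaction of a `CKL_m` formula at a point `(r,n)` of an interpreted system.
`Cφ` holds iff `E^k φ` holds for all `k ≥ 1`. -/
def IntSystem.satC {m : ℕ} (I : IntSystem m) : CKL m → GRun I.L m → ℕ → Prop
  | .prim p, r, n => I.val r n p
  | .neg φ, r, n => ¬ I.satC φ r n
  | .conj φ ψ, r, n => I.satC φ r n ∧ I.satC ψ r n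
  | .know i φ, r, n => ∀ r' ∈ I.runs, ∀ n' : ℕ, locEq i r n r' n' → I.satC φ r' n'
  | .ev φ, r, n => ∀ i : Fin m, ∀ r' ∈ I.runs, ∀ n' : ℕ, locEq i r n r' n' → I.satC φ r' n'
  | .comm φ, r, n => ∀ k : ℕ, 1 ≤ k → EIter I (fun r' n' => I.satC φ r' n') k r n
  | .next φ, r, n => I.satC φ r (n + 1)
  | .untl φ ψ, r, n =>
      ∃ n' : ℕ, n ≤ n' ∧ I.satC ψ r n' ∧ ∀ k : ℕ, n ≤ k → k < n' → I.satC φ r k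

/-- A `CKL_m` formula is valid with respect to a class `C` of interpreted systems if it is
satisfied at every point of every system in `C`. -/
def validC {m : ℕ} (C : Set (IntSystem m)) (φ : CKL m) : Prop :=
  ∀ I ∈ C, ∀ r ∈ I.runs, ∀ n : ℕ, I.satC φ r n

/-- A `CKL_m` formula is satisfiable with respect to a class `C` of interpreted systems
if it is satisfied at some point of some system in `C`. -/
def satisfiableC {m : ℕ} (C : Set (IntSystem m)) (φ : CKL m) : Prop :=
  ∃ I ∈ C, ∃ r ∈ I.runs, ∃ n : ℕ, I.satC φ r n

section AuxUIS

variable {m : ℕ}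

/-- Shift a run by one step, prepending a fresh global state at time 0. -/
def shiftRun {L : Type} (r : GRun L m) : GRun (Option L) m :=
  fun n => match n with
  | 0 => (none, fun _ => none)
  | n + 1 => (some (r n).1, fun i => some ((r n).2 i))

theorem shiftRun_inj {L : Type} : Function.Injective (shiftRun (L := L) (m := m)) := by
  intro r r' h
  funext n
  have h1 := congrFun h (n + 1)
  simp only [shiftRun, Prod.mk.injEq, Option.some.injEq] at h1
  exact Prod.ext h1.1 (funext fun i => Option.some.inj (congrFun h1.2 i))

theorem locEq_shift {L : Type} (i : Fin m) (r r' : GRun L m) (n n' : ℕ) :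
    locEq i (shiftRun r) (n + 1) (shiftRun r') (n' + 1) ↔ locEq i r n r' n' := by
  simp [locEq, shiftRun]

theorem locEq_shift_zero {L : Type} (i : Fin m) (r r' : GRun L m) (n : ℕ) :
    ¬ locEq i (shiftRun r) (n + 1) (shiftRun r') 0 := by
  simp [locEq, shiftRun]

theorem locEq_shift_zero' {L : Type} (i : Fin m) (r r' : GRun L m) (n : ℕ) :
    ¬ locEq i (shiftRun r) 0 (shiftRun r') (n + 1) := by
  simp [locEq, shiftRun]

/-- The system obtained by prepending a fixed fresh initial state to each run. -/
noncomputable def addInit (I : IntSystem m) : IntSystem m where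
  L := Option I.L
  runs := shiftRun '' I.runs
  val := fun g n p => ∃ r ∈ I.runs, g = shiftRun r ∧ ∃ n₀, n = n₀ + 1 ∧ I.val r n₀ p

theorem addInit_val (I : IntSystem m) {r : GRun I.L m} (hr : r ∈ I.runs) (n p : ℕ) :
    (addInit I).val (shiftRun r) (n + 1) p ↔ I.val r n p := by
  constructor
  · rintro ⟨r', hr', heq, n₀, hn, hv⟩
    obtain rfl := shiftRun_inj heq
    obtain rfl : n = n₀ := by omega
    exact hv
  · intro hv
    exact ⟨r, hr, rfl, n, rfl, hv⟩

theorem eiter_shift (I : IntSystem m) (P : GRun I.L m → ℕ → Prop)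
    (Q : GRun (Option I.L) m → ℕ → Prop)
    (hPQ : ∀ r ∈ I.runs, ∀ n, (Q (shiftRun r) (n + 1) ↔ P r n)) :
    ∀ k, ∀ r ∈ I.runs, ∀ n,
      (EIter (addInit I) Q k (shiftRun r) (n + 1) ↔ EIter I P k r n) := by
  intro k
  induction k with
  | zero => exact fun r hr n => hPQ r hr n
  | succ k ih =>
    intro r hr n
    constructor
    · intro h i r' hr' n' hle
      exact (ih r' hr' n').mp (h i (shiftRun r') ⟨r', hr', rfl⟩ (n' + 1)
        ((locEq_shift i r r' n n').mpr hle))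
    · rintro h i g ⟨r', hr', rfl⟩ n' hle
      cases n' with
      | zero => exact absurd hle (locEq_shift_zero i r r' n)
      | succ n₀ =>
        exact (ih r' hr' n₀).mpr (h i r' hr' n₀ ((locEq_shift i r r' n n₀).mp hle))

theorem satC_shift (I : IntSystem m) :
    ∀ φ : CKL m, ∀ r ∈ I.runs, ∀ n,
      ((addInit I).satC φ (shiftRun r) (n + 1) ↔ I.satC φ r n) := by
  intro φ
  induction φ with
  | prim p =>
    intro r hr n
    exact addInit_val I hr n p
  | neg φ ih =>
    intro r hr n
    exact not_congr (ih r hr n)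
  | conj φ ψ ihφ ihψ =>
    intro r hr n
    exact and_congr (ihφ r hr n) (ihψ r hr n)
  | know i φ ih =>
    intro r hr n
    constructor
    · intro h r' hr' n' hle
      exact (ih r' hr' n').mp (h (shiftRun r') ⟨r', hr', rfl⟩ (n' + 1)
        ((locEq_shift i r r' n n').mpr hle))
    · rintro h g ⟨r', hr', rfl⟩ n' hle
      cases n' with
      | zero => exact absurd hle (locEq_shift_zero i r r' n)
      | succ n₀ => exact (ih r' hr' n₀).mpr (h r' hr' n₀ ((locEq_shift i r r' n n₀).mp hle))
  | ev φ ih =>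
    intro r hr n
    constructor
    · intro h i r' hr' n' hle
      exact (ih r' hr' n').mp (h i (shiftRun r') ⟨r', hr', rfl⟩ (n' + 1)
        ((locEq_shift i r r' n n').mpr hle))
    · rintro h i g ⟨r', hr', rfl⟩ n' hle
      cases n' with
      | zero => exact absurd hle (locEq_shift_zero i r r' n)
      | succ n₀ => exact (ih r' hr' n₀).mpr (h i r' hr' n₀ ((locEq_shift i r r' n n₀).mp hle))
  | comm φ ih =>
    intro r hr n
    have key := eiter_shift I (fun r' n' => I.satC φ r' n')
      (fun g n' => (addInit I).satC φ g n') ih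
    exact forall₂_congr fun k _ => key k r hr n
  | next φ ih =>
    intro r hr n
    exact ih r hr (n + 1)
  | untl φ ψ ihφ ihψ =>
    intro r hr n
    constructor
    · rintro ⟨n', hn', hψ, hφ⟩
      obtain ⟨n₀, rfl⟩ : ∃ n₀, n' = n₀ + 1 := ⟨n' - 1, by omega⟩
      refine ⟨n₀, by omega, (ihψ r hr n₀).mp hψ, fun k hk1 hk2 => ?_⟩
      exact (ihφ r hr k).mp (hφ (k + 1) (by omega) (by omega))
    · rintro ⟨n₀, hn₀, hψ, hφ⟩
      refine ⟨n₀ + 1, by omega, (ihψ r hr n₀).mpr hψ, fun k hk1 hk2 => ?_⟩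
      obtain ⟨k₀, rfl⟩ : ∃ k₀, k = k₀ + 1 := ⟨k - 1, by omega⟩
      exact (ihφ r hr k₀).mpr (hφ k₀ (by omega) (by omega))

theorem dedup_map {L L' : Type} (f : L → L') (hf : Function.Injective f) :
    ∀ l : List L, dedup (l.map f) = (dedup l).map f
  | [] => rfl
  | [a] => rfl
  | a :: b :: t => by
    by_cases h : a = b
    · simp only [List.map_cons, dedup, if_pos h, if_pos (congrArg f h)]
      exact dedup_map f hf (b :: t)
    · have h' : ¬ f a = f b := fun hfe => h (hf hfe)
      simp only [List.map_cons, dedup, if_neg h, if_neg h', List.map_cons]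
      rw [← List.map_cons, dedup_map f hf (b :: t)]

theorem dedup_none_cons {L : Type} (l : List L) :
    dedup ((none : Option L) :: l.map some) = none :: dedup (l.map some) := by
  cases l with
  | nil => rfl
  | cons a t =>
    simp only [List.map_cons, dedup]
    rw [if_neg (by simp)]

theorem lsSeq_shift {L : Type} (i : Fin m) (r : GRun L m) (n : ℕ) :
    lsSeq i (shiftRun r) (n + 1) = none :: (lsSeq i r n).map some := by
  unfold lsSeq
  have h1 : (List.range (n + 2)).map (fun k => ((shiftRun r) k).2 i)
      = (none : Option L) :: ((List.range (n + 1)).map (fun k => (r k).2 i)).map some := by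
    rw [List.range_succ_eq_map]
    simp only [List.map_cons, List.map_map]
    rfl
  rw [h1, dedup_none_cons, dedup_map some (fun a b => Option.some.inj)]

theorem addInit_sync {I : IntSystem m} (h : I.Sync) : (addInit I).Sync := by
  rintro i g ⟨r, hr, rfl⟩ g' ⟨r', hr', rfl⟩ n n' hle
  match n, n' with
  | 0, 0 => rfl
  | 0, n' + 1 => exact absurd hle (locEq_shift_zero' i r r' n')
  | n + 1, 0 => exact absurd hle (locEq_shift_zero i r r' n)
  | n + 1, n' + 1 =>
    exact congrArg Nat.succ (h i r hr r' hr' n n' ((locEq_shift i r r' n n').mp hle))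

theorem addInit_pr {I : IntSystem m} {i : Fin m} (h : I.PerfectRecall i) :
    (addInit I).PerfectRecall i := by
  rintro g ⟨r, hr, rfl⟩ g' ⟨r', hr', rfl⟩ n n' hle
  match n, n' with
  | 0, 0 => rfl
  | 0, n' + 1 => exact absurd hle (locEq_shift_zero' i r r' n')
  | n + 1, 0 => exact absurd hle (locEq_shift_zero i r r' n)
  | n + 1, n' + 1 =>
    show lsSeq (L := Option I.L) i (shiftRun r) (n + 1) = lsSeq (L := Option I.L) i (shiftRun r') (n' + 1)
    rw [lsSeq_shift, lsSeq_shift,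
      h r hr r' hr' n n' ((locEq_shift i r r' n n').mp hle)]

theorem addInit_uis (I : IntSystem m) : (addInit I).UIS := by
  rintro g ⟨r, hr, rfl⟩ g' ⟨r', hr', rfl⟩
  rfl

end AuxUIS

/-- **Lemma 5.4.** Let `x` be a subset of `{pr, sync}` (encoded by the two Booleans
`xpr` and `xsync`).  If a `CKL_m` formula is satisfiable with respect to `C_m^x`, then it
is also satisfiable with respect to `C_m^{x,uis}`. -/
theorem satisfiable_with_uis (m : ℕ) (xpr xsync : Bool) (φ : CKL m)
    (h : satisfiableC {I : IntSystem m |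
        (xpr = true → ∀ i, I.PerfectRecall i) ∧ (xsync = true → I.Sync)} φ) :
    satisfiableC {I : IntSystem m |
        ((xpr = true → ∀ i, I.PerfectRecall i) ∧ (xsync = true → I.Sync)) ∧ I.UIS} φ := by
  obtain ⟨I, ⟨hpr, hsync⟩, r, hr, n, hsat⟩ := h
  refine ⟨addInit I, ⟨⟨fun hx i => addInit_pr (hpr hx i), fun hx => addInit_sync (hsync hx)⟩,
    addInit_uis I⟩, shiftRun r, ⟨r, hr, rfl⟩, n + 1, ?_⟩
  exact (satC_shift I φ r hr n).mpr hsat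

end HalpernVardiMeyden
end
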